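/- arXiv:1908.07460 — 3 statements merged into one kernel-verified Lean document; each statement's English description precedes it below -/
import Mathlib

section
/- Let Σ̂ be a symmetric positive semidefinite p×p matrix, μ̂ ∈ ℝ^p, α ∈ ℝ^p with support S of cardinality s, λ > 0, and suppose ‖Σ̂ α − μ̂‖_∞ ≤ λ/2. Let α̃ minimize β ↦ (1/2) βᵀ Σ̂ β − βᵀ μ̂ + λ ‖β‖₁ over a set containing both α and α̃. Then the error u = α̃ − α satisfies ‖u_{S^c}‖₁ ≤ 3 ‖u_S‖₁. -/
open Matrix

/-
Expanding the quadratic loss around `α` gives, with `u = α̃ - α`,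
`L(α̃) - L(α) = ½ uᵀΣ̂u + uᵀ(Σ̂α - μ̂) + λ(‖α̃‖₁ - ‖α‖₁)`. The quadratic term is nonnegative and
Hölder bounds the linear one by `(λ/2)‖u‖₁`, so the basic inequality yields
`‖α + u‖₁ ≤ ‖α‖₁ + ½‖u‖₁`. Splitting along the support `S` of `α` and using the triangle
inequality on `S` turns this into `‖u_{Sᶜ}‖₁ ≤ 3‖u_S‖₁`.
-/

section

variable {ι R : Type*} [Fintype ι]

theorem quadratic_sub_quadratic_eq [CommRing R] {A : Matrix ι ι R} (hA : A.IsSymm)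
    (μ a b : ι → R) :
    (b ⬝ᵥ A *ᵥ b - 2 * b ⬝ᵥ μ) - (a ⬝ᵥ A *ᵥ a - 2 * a ⬝ᵥ μ)
      = (b - a) ⬝ᵥ A *ᵥ (b - a) + 2 * (b - a) ⬝ᵥ (A *ᵥ a - μ) := by
  have hswap : b ⬝ᵥ A *ᵥ a = a ⬝ᵥ A *ᵥ b := by
    rw [dotProduct_mulVec, ← mulVec_transpose, hA.eq, dotProduct_comm]
  simp only [mulVec_sub, dotProduct_sub, sub_dotProduct]
  rw [hswap]
  ring

theorem abs_dotProduct_le_mul_sum_abs [CommRing R] [LinearOrder R] [IsOrderedRing R]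
    {u v : ι → R} {c : R} (hv : ∀ i, |v i| ≤ c) : |u ⬝ᵥ v| ≤ c * ∑ i, |u i| := by
  calc |u ⬝ᵥ v| ≤ ∑ i, |u i * v i| := Finset.abs_sum_le_sum_abs _ _
    _ ≤ ∑ i, |u i| * c := by
      gcongr with i
      rw [abs_mul]
      exact mul_le_mul_of_nonneg_left (hv i) (abs_nonneg _)
    _ = c * ∑ i, |u i| := by rw [Finset.mul_sum]; simp only [mul_comm]

theorem sum_abs_compl_le_three_mul_of_sum_abs_le [DecidableEq ι] [Field R] [LinearOrder R]
    [IsStrictOrderedRing R] {α β : ι → R} {S : Finset ι} (hsupp : ∀ i ∉ S, α i = 0)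
    (h : ∑ i, |β i| ≤ ∑ i, |α i| + (1 / 2) * ∑ i, |β i - α i|) :
    ∑ i ∈ Sᶜ, |β i - α i| ≤ 3 * ∑ i ∈ S, |β i - α i| := by
  have hα : ∑ i ∈ Sᶜ, |α i| = 0 :=
    Finset.sum_eq_zero fun i hi => by rw [hsupp i (Finset.mem_compl.mp hi), abs_zero]
  have hβ : ∑ i ∈ Sᶜ, |β i| = ∑ i ∈ Sᶜ, |β i - α i| :=
    Finset.sum_congr rfl fun i hi => by rw [hsupp i (Finset.mem_compl.mp hi), sub_zero]
  have htri : ∑ i ∈ S, |α i| ≤ ∑ i ∈ S, |β i| + ∑ i ∈ S, |β i - α i| := by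
    rw [← Finset.sum_add_distrib]
    gcongr with i
    linarith [abs_sub_comm (β i) (α i), abs_sub_abs_le_abs_sub (α i) (β i)]
  simp only [← Finset.sum_add_sum_compl S] at h
  linarith

end

theorem stmt8_general {p : ℕ} (Shat : Matrix (Fin p) (Fin p) ℝ) (hPSD : Shat.PosSemidef)
    (muhat α αt : Fin p → ℝ) (S : Finset (Fin p))
    (hsupp : ∀ i ∉ S, α i = 0) (lam : ℝ) (hlam : 0 < lam)
    (hevent : ∀ i, |(Shat.mulVec α - muhat) i| ≤ lam / 2)
    (hbasic : (1 / 2) * (αt ⬝ᵥ Shat.mulVec αt) - αt ⬝ᵥ muhat + lam * ∑ i, |αt i|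
        ≤ (1 / 2) * (α ⬝ᵥ Shat.mulVec α) - α ⬝ᵥ muhat + lam * ∑ i, |α i|) :
    ∑ i ∈ Sᶜ, |αt i - α i| ≤ 3 * ∑ i ∈ S, |αt i - α i| := by
  have hsymm : Shat.IsSymm := hPSD.isHermitian
  have hexpand := quadratic_sub_quadratic_eq hsymm muhat α αt
  have hquad : 0 ≤ (αt - α) ⬝ᵥ Shat *ᵥ (αt - α) := by
    simpa using hPSD.dotProduct_mulVec_nonneg (αt - α)
  have hcross := neg_abs_le ((αt - α) ⬝ᵥ (Shat *ᵥ α - muhat))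
  have hholder := abs_dotProduct_le_mul_sum_abs (u := αt - α) hevent
  refine sum_abs_compl_le_three_mul_of_sum_abs_le hsupp ?_
  have hl1 : lam * ∑ i, |αt i| ≤ lam * (∑ i, |α i| + (1 / 2) * ∑ i, |αt i - α i|) := by
    simp only [Pi.sub_apply] at hholder
    linarith
  exact le_of_mul_le_mul_left hl1 hlam

/-- Cone condition for the ℓ₁-regularized M-estimator: on the event
`‖Σ̂α − μ̂‖_∞ ≤ λ/2`, the error `u = α̃ − α` satisfies `‖u_{S^c}‖₁ ≤ 3 ‖u_S‖₁`. -/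
theorem stmt8 {p : ℕ} (Shat : Matrix (Fin p) (Fin p) ℝ) (hPSD : Shat.PosSemidef)
    (muhat α αt : Fin p → ℝ) (S : Finset (Fin p)) (s : ℕ) (hcard : S.card = s)
    (hsupp : ∀ i ∉ S, α i = 0) (lam : ℝ) (hlam : 0 < lam)
    (hevent : ∀ i, |(Shat.mulVec α - muhat) i| ≤ lam / 2)
    (hbasic : (1 / 2) * (αt ⬝ᵥ Shat.mulVec αt) - αt ⬝ᵥ muhat + lam * ∑ i, |αt i|
        ≤ (1 / 2) * (α ⬝ᵥ Shat.mulVec α) - α ⬝ᵥ muhat + lam * ∑ i, |α i|) :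
    ∑ i ∈ Sᶜ, |αt i - α i| ≤ 3 * ∑ i ∈ S, |αt i - α i| :=
  stmt8_general Shat hPSD muhat α αt S hsupp lam hlam hevent hbasic
end

section
/- Let Σ̂ be symmetric positive semidefinite, μ̂ ∈ ℝ^p, α with support S, |S| = s, λ > 0 with ‖Σ̂α − μ̂‖_∞ ≤ λ/2, and let α̃ satisfy the basic inequality (1/2)α̃ᵀΣ̂α̃ − α̃ᵀμ̂ + λ‖α̃‖₁ ≤ (1/2)αᵀΣ̂α − αᵀμ̂ + λ‖α‖₁. If moreover there is κ₀ > 0 such that uᵀΣ̂u ≥ κ₀² ‖u‖₂² for all u with ‖u_{S^c}‖₁ ≤ 3‖u_S‖₁, then ‖α̃ − α‖₂ ≤ 3 λ √s / κ₀². -/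
/-!
Write `u = α̃ - α`. Expanding the quadratic around `α`, the basic inequality becomes
`½ uᵀΣ̂u + uᵀ(Σ̂α - μ̂) ≤ λ(‖α‖₁ - ‖α̃‖₁)`. The noise term is at least `-(λ/2)‖u‖₁` by
Hölder, and since `α` vanishes off `S`, `‖α‖₁ - ‖α̃‖₁ ≤ ‖u_S‖₁ - ‖u_{Sᶜ}‖₁`; together
`uᵀΣ̂u ≤ λ(3‖u_S‖₁ - ‖u_{Sᶜ}‖₁)`. Positivity of `Σ̂` puts `u` in the cone, so the restricted
eigenvalue condition and `‖u_S‖₁ ≤ √s ‖u‖₂` give `κ₀² ‖u‖₂² ≤ 3λ√s ‖u‖₂`.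
-/

open Matrix Finset

namespace Matrix

variable {n R : Type*} [Fintype n]

theorem IsSymm.dotProduct_mulVec_add_self [CommRing R] {A : Matrix n n R} (hA : A.IsSymm)
    (v u : n → R) :
    (v + u) ⬝ᵥ A *ᵥ (v + u) = v ⬝ᵥ A *ᵥ v + 2 * (u ⬝ᵥ A *ᵥ v) + u ⬝ᵥ A *ᵥ u := by
  have hcomm : v ⬝ᵥ A *ᵥ u = u ⬝ᵥ A *ᵥ v := by
    rw [← dotProduct_transpose_mulVec, hA.eq]
  simp only [mulVec_add, dotProduct_add, add_dotProduct, hcomm]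
  ring

end Matrix

section L1

variable {n : Type*} [Fintype n]

theorem abs_dotProduct_le_mul_sum_abs_s9 {u w : n → ℝ} {c : ℝ} (hw : ∀ i, |w i| ≤ c) :
    |u ⬝ᵥ w| ≤ c * ∑ i, |u i| := by
  rw [mul_sum]
  refine (abs_sum_le_sum_abs _ _).trans (sum_le_sum fun i _ => ?_)
  rw [abs_mul, mul_comm c]
  exact mul_le_mul_of_nonneg_left (hw i) (abs_nonneg _)

variable [DecidableEq n]

theorem sum_abs_sub_sum_abs_le_of_support_subset {α β : n → ℝ} {S : Finset n}
    (hsupp : ∀ i ∉ S, α i = 0) :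
    ∑ i, |α i| - ∑ i, |β i| ≤ ∑ i ∈ S, |(β - α) i| - ∑ i ∈ Sᶜ, |(β - α) i| := by
  have hS : ∑ i ∈ S, |α i| - ∑ i ∈ S, |β i| ≤ ∑ i ∈ S, |(β - α) i| := by
    rw [← sum_sub_distrib]
    exact sum_le_sum fun i _ => by
      simpa only [Pi.sub_apply, abs_sub_comm (β i)] using abs_sub_abs_le_abs_sub (α i) (β i)
  have hα : ∑ i ∈ Sᶜ, |α i| = 0 :=
    sum_eq_zero fun i hi => by rw [hsupp i (mem_compl.mp hi), abs_zero]
  have hβ : ∑ i ∈ Sᶜ, |β i| = ∑ i ∈ Sᶜ, |(β - α) i| :=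
    sum_congr rfl fun i hi => by rw [Pi.sub_apply, hsupp i (mem_compl.mp hi), sub_zero]
  rw [← sum_add_sum_compl S, ← sum_add_sum_compl S (fun i => |β i|)]
  linarith

end L1

theorem sum_abs_le_sqrt_card_mul_sqrt_dotProduct {n : Type*} [Fintype n] (u : n → ℝ)
    (S : Finset n) : ∑ i ∈ S, |u i| ≤ √(#S : ℝ) * √(u ⬝ᵥ u) := by
  have hsq : ∑ i ∈ S, |u i| ^ 2 ≤ u ⬝ᵥ u := by
    simp only [sq_abs, dotProduct, ← sq]
    exact sum_le_sum_of_subset_of_nonneg (subset_univ S) fun i _ _ => sq_nonneg _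
  rw [← Real.sqrt_mul (Nat.cast_nonneg _)]
  refine Real.le_sqrt_of_sq_le ((sq_sum_le_card_mul_sum_sq).trans ?_)
  exact mul_le_mul_of_nonneg_left hsq (Nat.cast_nonneg _)

theorem le_div_of_mul_sq_le_mul {x k c : ℝ} (hx : 0 ≤ x) (hk : 0 < k) (hc : 0 ≤ c)
    (h : k * x ^ 2 ≤ c * x) : x ≤ c / k := by
  rw [le_div_iff₀ hk]
  rcases hx.eq_or_lt with rfl | hx
  · simpa using hc
  · nlinarith

theorem dotProduct_mulVec_sub_le_of_basic_ineq {n : Type*} [Fintype n] [DecidableEq n]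
    {A : Matrix n n ℝ} (hA : A.IsSymm) {μ α αt : n → ℝ} {S : Finset n}
    (hsupp : ∀ i ∉ S, α i = 0) {lam : ℝ} (hlam : 0 ≤ lam)
    (hevent : ∀ i, |(A *ᵥ α - μ) i| ≤ lam / 2)
    (hbasic : (1 / 2) * (αt ⬝ᵥ A *ᵥ αt) - αt ⬝ᵥ μ + lam * ∑ i, |αt i|
        ≤ (1 / 2) * (α ⬝ᵥ A *ᵥ α) - α ⬝ᵥ μ + lam * ∑ i, |α i|) :
    (αt - α) ⬝ᵥ A *ᵥ (αt - α)
      ≤ lam * (3 * ∑ i ∈ S, |(αt - α) i| - ∑ i ∈ Sᶜ, |(αt - α) i|) := by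
  set u := αt - α
  have hαt : αt = α + u := by simp [u]
  have hexpand := hαt ▸ hA.dotProduct_mulVec_add_self α u
  have hμ : αt ⬝ᵥ μ = α ⬝ᵥ μ + u ⬝ᵥ μ := by rw [hαt, add_dotProduct]
  have hnoise : -(lam / 2 * ∑ i, |u i|) ≤ u ⬝ᵥ (A *ᵥ α - μ) :=
    neg_le_of_abs_le (abs_dotProduct_le_mul_sum_abs_s9 hevent)
  have hl1 := mul_le_mul_of_nonneg_left
    (sum_abs_sub_sum_abs_le_of_support_subset (β := αt) hsupp) hlam
  rw [← sum_add_sum_compl S, dotProduct_sub] at hnoise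
  linarith

/-- ℓ₂-error bound for the ℓ₁-regularized M-estimator under a restricted eigenvalue
condition: `‖α̃ − α‖₂ ≤ 3 λ √s / κ₀²`. -/
theorem stmt9 {p : ℕ} (Shat : Matrix (Fin p) (Fin p) ℝ) (hPSD : Shat.PosSemidef)
    (muhat α αt : Fin p → ℝ) (S : Finset (Fin p)) (s : ℕ) (hcard : S.card = s)
    (hsupp : ∀ i ∉ S, α i = 0) (lam κ : ℝ) (hlam : 0 < lam) (hκ : 0 < κ)
    (hevent : ∀ i, |(Shat.mulVec α - muhat) i| ≤ lam / 2)
    (hbasic : (1 / 2) * (αt ⬝ᵥ Shat.mulVec αt) - αt ⬝ᵥ muhat + lam * ∑ i, |αt i|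
        ≤ (1 / 2) * (α ⬝ᵥ Shat.mulVec α) - α ⬝ᵥ muhat + lam * ∑ i, |α i|)
    (hRE : ∀ u : Fin p → ℝ, (∑ i ∈ Sᶜ, |u i| ≤ 3 * ∑ i ∈ S, |u i|) →
        κ ^ 2 * (u ⬝ᵥ u) ≤ u ⬝ᵥ Shat.mulVec u) :
    Real.sqrt ((αt - α) ⬝ᵥ (αt - α)) ≤ 3 * lam * Real.sqrt s / κ ^ 2 := by
  set u := αt - α
  have hquad : u ⬝ᵥ Shat *ᵥ u ≤ lam * (3 * ∑ i ∈ S, |u i| - ∑ i ∈ Sᶜ, |u i|) :=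
    dotProduct_mulVec_sub_le_of_basic_ineq (isHermitian_iff_isSymm.mp hPSD.1) hsupp
      hlam.le hevent hbasic
  have hnonneg : 0 ≤ u ⬝ᵥ Shat *ᵥ u := by
    simpa using hPSD.dotProduct_mulVec_nonneg u
  have hcone : ∑ i ∈ Sᶜ, |u i| ≤ 3 * ∑ i ∈ S, |u i| :=
    sub_nonneg.mp (nonneg_of_mul_nonneg_right (hnonneg.trans hquad) hlam)
  have hSnonneg : 0 ≤ ∑ i ∈ Sᶜ, |u i| := sum_nonneg fun i _ => abs_nonneg _
  have hcs := sum_abs_le_sqrt_card_mul_sqrt_dotProduct u S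
  rw [hcard] at hcs
  refine le_div_of_mul_sq_le_mul (Real.sqrt_nonneg _) (by positivity) (by positivity) ?_
  have huu : 0 ≤ u ⬝ᵥ u := sum_nonneg fun i _ => mul_self_nonneg (u i)
  rw [Real.sq_sqrt huu]
  calc κ ^ 2 * (u ⬝ᵥ u) ≤ u ⬝ᵥ Shat *ᵥ u := hRE u hcone
    _ ≤ 3 * lam * ∑ i ∈ S, |u i| := by nlinarith
    _ ≤ 3 * lam * (√s * √(u ⬝ᵥ u)) := by gcongr
    _ = 3 * lam * √s * √(u ⬝ᵥ u) := by ring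
end

section
/- Let Σ̂ be symmetric positive semidefinite, μ̂ ∈ ℝ^p, λ > 0, γ > 0, and let α̃ minimize β ↦ (1/2) βᵀ Σ̂ β − βᵀ μ̂ + λ‖β‖₁ over {β : ‖β‖₂ ≤ γ}. Then μ̂ᵀ α̃ − α̃ᵀ Σ̂ α̃ ≥ λ ‖α̃‖₁. Consequently, for any c ∈ ℝ, the plug-in estimator θ̃_c = c μ̂ᵀα̃ + (1−c) α̃ᵀΣ̂α̃ satisfies |θ̃_c − θ̃₂| ≥ |c − 2| · λ ‖α̃‖₁, where θ̃₂ = 2μ̂ᵀα̃ − α̃ᵀΣ̂α̃. -/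
/-!
Along the ray `w ↦ w • α̃`, `w ∈ [0, 1]`, which stays in the ball, the objective is the quadratic
`w ↦ (α̃ᵀΣ̂α̃ / 2) w² + (λ‖α̃‖₁ − μ̂ᵀα̃) w`. It is minimized at `w = 1`, so its slope
`α̃ᵀΣ̂α̃ + λ‖α̃‖₁ − μ̂ᵀα̃` there is nonpositive. The second claim follows from
`θ̃_c − θ̃₂ = (c − 2)(μ̂ᵀα̃ − α̃ᵀΣ̂α̃)`.
-/

open Matrix

theorem add_nonpos_of_isMinOn_quadratic {a b : ℝ}
    (h : IsMinOn (fun w : ℝ => a / 2 * w ^ 2 + b * w) (Set.Icc 0 1) 1) : a + b ≤ 0 := by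
  by_contra! hab
  have at_zero : a / 2 + b ≤ 0 := by simpa using isMinOn_iff.1 h 0 (by simp)
  have ha : 0 < a := by linarith
  -- compare with the unconstrained minimizer `-b / a`, which lies in `[1/2, 1)`
  have hw : -b / a * a = -b := div_mul_cancel₀ _ ha.ne'
  have at_vertex := isMinOn_iff.1 h (-b / a)
    ⟨div_nonneg (by linarith) ha.le, (div_le_one ha).2 (by linarith)⟩
  simp only [one_pow, mul_one] at at_vertex
  nlinarith [sq_nonneg (-b / a)]

theorem starConvex_setOf_dotProduct_self_le {n : Type*} [Fintype n] (r : ℝ) :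
    StarConvex ℝ 0 {β : n → ℝ | β ⬝ᵥ β ≤ r} := by
  refine starConvex_zero_iff.2 fun β (hβ : β ⬝ᵥ β ≤ r) w hw₀ hw₁ => ?_
  have hββ : 0 ≤ β ⬝ᵥ β := Finset.sum_nonneg fun i _ => mul_self_nonneg (β i)
  calc (w • β) ⬝ᵥ (w • β) = w ^ 2 * (β ⬝ᵥ β) := by
        simp only [smul_dotProduct, dotProduct_smul, smul_eq_mul]; ring
    _ ≤ 1 * (β ⬝ᵥ β) := by gcongr; exact pow_le_one₀ hw₀ hw₁
    _ ≤ r := by rwa [one_mul]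

section Lasso

variable {n : Type*} [Fintype n]

noncomputable def lassoObjective (S : Matrix n n ℝ) (μ : n → ℝ) (lam : ℝ) (β : n → ℝ) : ℝ :=
  1 / 2 * (β ⬝ᵥ S *ᵥ β) - β ⬝ᵥ μ + lam * ∑ i, |β i|

theorem lassoObjective_smul (S : Matrix n n ℝ) (μ : n → ℝ) (lam : ℝ) (β : n → ℝ) {w : ℝ}
    (hw : 0 ≤ w) :
    lassoObjective S μ lam (w • β) =
      (β ⬝ᵥ S *ᵥ β) / 2 * w ^ 2 + (lam * ∑ i, |β i| - β ⬝ᵥ μ) * w := by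
  have l1_smul : ∑ i, |(w • β) i| = w * ∑ i, |β i| := by
    simp only [Pi.smul_apply, smul_eq_mul, abs_mul, abs_of_nonneg hw, Finset.mul_sum]
  simp only [lassoObjective, l1_smul, mulVec_smul, smul_dotProduct, dotProduct_smul, smul_eq_mul]
  ring

theorem lam_mul_l1_le_of_isMinOn_lassoObjective {S : Matrix n n ℝ} {μ : n → ℝ} {lam : ℝ}
    {s : Set (n → ℝ)} {α : n → ℝ} (hs : StarConvex ℝ 0 s) (hα : α ∈ s)
    (hmin : IsMinOn (lassoObjective S μ lam) s α) :
    lam * ∑ i, |α i| ≤ μ ⬝ᵥ α - α ⬝ᵥ S *ᵥ α := by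
  have along_ray : IsMinOn (fun w : ℝ => (α ⬝ᵥ S *ᵥ α) / 2 * w ^ 2
      + (lam * ∑ i, |α i| - α ⬝ᵥ μ) * w) (Set.Icc 0 1) 1 := by
    refine isMinOn_iff.2 fun w hw => ?_
    rw [← lassoObjective_smul S μ lam α zero_le_one, ← lassoObjective_smul S μ lam α hw.1,
      one_smul]
    exact isMinOn_iff.1 hmin _ (hs.smul_mem hα hw.1 hw.2)
  have := add_nonpos_of_isMinOn_quadratic along_ray
  rw [dotProduct_comm μ α]
  linarith

end Lasso

theorem stmt11_general {p : ℕ} (Shat : Matrix (Fin p) (Fin p) ℝ)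
    (muhat : Fin p → ℝ) (lam γ : ℝ)
    (αt : Fin p → ℝ) (hfeas : αt ⬝ᵥ αt ≤ γ ^ 2)
    (hmin : ∀ β : Fin p → ℝ, β ⬝ᵥ β ≤ γ ^ 2 →
        (1 / 2) * (αt ⬝ᵥ Shat.mulVec αt) - αt ⬝ᵥ muhat + lam * ∑ i, |αt i|
          ≤ (1 / 2) * (β ⬝ᵥ Shat.mulVec β) - β ⬝ᵥ muhat + lam * ∑ i, |β i|) :
    lam * ∑ i, |αt i| ≤ muhat ⬝ᵥ αt - αt ⬝ᵥ Shat.mulVec αt ∧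
    ∀ c : ℝ, |c - 2| * (lam * ∑ i, |αt i|)
        ≤ |(c * (muhat ⬝ᵥ αt) + (1 - c) * (αt ⬝ᵥ Shat.mulVec αt))
            - (2 * (muhat ⬝ᵥ αt) - αt ⬝ᵥ Shat.mulVec αt)| := by
  have key : lam * ∑ i, |αt i| ≤ muhat ⬝ᵥ αt - αt ⬝ᵥ Shat *ᵥ αt :=
    lam_mul_l1_le_of_isMinOn_lassoObjective (starConvex_setOf_dotProduct_self_le (γ ^ 2))
      hfeas (isMinOn_iff.2 hmin)
  refine ⟨key, fun c => ?_⟩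
  rw [show (c * (muhat ⬝ᵥ αt) + (1 - c) * (αt ⬝ᵥ Shat *ᵥ αt))
      - (2 * (muhat ⬝ᵥ αt) - αt ⬝ᵥ Shat *ᵥ αt)
      = (c - 2) * (muhat ⬝ᵥ αt - αt ⬝ᵥ Shat *ᵥ αt) by ring, abs_mul]
  exact mul_le_mul_of_nonneg_left (key.trans (le_abs_self _)) (abs_nonneg _)

/-- For a minimizer `α̃` of the ℓ₁-regularized objective over the ℓ₂-ball of radius `γ`,
one has `μ̂ᵀα̃ − α̃ᵀΣ̂α̃ ≥ λ‖α̃‖₁`, hence for any `c`,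
`|θ̃_c − θ̃₂| ≥ |c − 2| λ ‖α̃‖₁`. -/
theorem stmt11 {p : ℕ} (Shat : Matrix (Fin p) (Fin p) ℝ) (hPSD : Shat.PosSemidef)
    (muhat : Fin p → ℝ) (lam γ : ℝ) (hlam : 0 < lam) (hγ : 0 < γ)
    (αt : Fin p → ℝ) (hfeas : αt ⬝ᵥ αt ≤ γ ^ 2)
    (hmin : ∀ β : Fin p → ℝ, β ⬝ᵥ β ≤ γ ^ 2 →
        (1 / 2) * (αt ⬝ᵥ Shat.mulVec αt) - αt ⬝ᵥ muhat + lam * ∑ i, |αt i|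
          ≤ (1 / 2) * (β ⬝ᵥ Shat.mulVec β) - β ⬝ᵥ muhat + lam * ∑ i, |β i|) :
    lam * ∑ i, |αt i| ≤ muhat ⬝ᵥ αt - αt ⬝ᵥ Shat.mulVec αt ∧
    ∀ c : ℝ, |c - 2| * (lam * ∑ i, |αt i|)
        ≤ |(c * (muhat ⬝ᵥ αt) + (1 - c) * (αt ⬝ᵥ Shat.mulVec αt))
            - (2 * (muhat ⬝ᵥ αt) - αt ⬝ᵥ Shat.mulVec αt)| :=
  stmt11_general Shat muhat lam γ αt hfeas hmin
end
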